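/- arXiv:2512.10012 — 5 statements merged into one kernel-verified Lean document; each statement's English description precedes it below -/
import Mathlib

section
/- Let c, x > 0 and v ≥ 0 be real numbers. Then the infimum over all t with 0 < t and c·t < 1 of the expression v·t/(2(1−c·t)) + x/t equals c·x + √(2·x·v). -/
lemma amgm_sqrt (a b : ℝ) (ha : 0 ≤ a) (hb : 0 ≤ b) :
    Real.sqrt (4 * (a * b)) ≤ a + b := by
  have h : 4 * (a * b) ≤ (a + b) ^ 2 := by nlinarith [sq_nonneg (a - b)]
  calc Real.sqrt (4 * (a * b)) ≤ Real.sqrt ((a + b) ^ 2) := Real.sqrt_le_sqrt h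
    _ = a + b := Real.sqrt_sq (by linarith)

theorem stmt_1 (c x v : ℝ) (hc : 0 < c) (hx : 0 < x) (hv : 0 ≤ v) :
    sInf {y : ℝ | ∃ t : ℝ, 0 < t ∧ c * t < 1 ∧ y = v * t / (2 * (1 - c * t)) + x / t}
      = c * x + Real.sqrt (2 * x * v) := by
  set S := {y : ℝ | ∃ t : ℝ, 0 < t ∧ c * t < 1 ∧ y = v * t / (2 * (1 - c * t)) + x / t}
  set a := c * x + Real.sqrt (2 * x * v) with ha
  have hne : S.Nonempty := by
    refine ⟨v * (1/(2*c)) / (2 * (1 - c * (1/(2*c)))) + x / (1/(2*c)), 1/(2*c), ?_, ?_, rfl⟩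
    · positivity
    · rw [mul_one_div, div_lt_one (by linarith)]; linarith
  have hlb : ∀ y ∈ S, a ≤ y := by
    rintro y ⟨t, ht, h1, rfl⟩
    have hs : 0 < (1 - c * t) / t := div_pos (by linarith) ht
    set s := (1 - c * t) / t with hsdef
    have hy : v * t / (2 * (1 - c * t)) + x / t = c * x + (v / (2 * s) + x * s) := by
      rw [hsdef]; have h1c : 1 - c * t ≠ 0 := (by linarith : (0:ℝ) < 1 - c * t).ne'; field_simp
      have hI : (1 - t * c)⁻¹ * (1 - t * c) = 1 := inv_mul_cancel₀ (by rw [mul_comm]; exact h1c)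
      linear_combination (-2 * x * (1 - t * c)) * hI
    rw [hy, ha]
    have h2 : 2 * x * v = 4 * ((v / (2 * s)) * (x * s)) := by
      field_simp; ring
    have := amgm_sqrt (v / (2 * s)) (x * s) (by positivity) (by positivity)
    rw [h2]
    linarith
  have hkey : ∀ ε : ℝ, 0 < ε → ∃ y ∈ S, y < a + ε := by
    intro ε hε
    rcases eq_or_lt_of_le hv with hv0 | hv0
    · -- v = 0
      have hsq : Real.sqrt (2 * x * v) = 0 := by rw [← hv0]; simp
      set w := c * x + ε with hw
      have hw0 : 0 < w := by positivity
      have hcw : x / w < 1 / c := by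
        rw [div_lt_div_iff₀ hw0 hc]
        nlinarith
      set t := (x / w + 1 / c) / 2 with htdef
      have ht0 : 0 < t := by positivity
      have htlt : t < 1 / c := by rw [htdef]; linarith
      have htgt : x / w < t := by rw [htdef]; linarith
      refine ⟨v * t / (2 * (1 - c * t)) + x / t, ⟨t, ht0, ?_, rfl⟩, ?_⟩
      · rw [mul_comm]; exact (lt_div_iff₀ hc).mp htlt
      · have hv' : v * t / (2 * (1 - c * t)) = 0 := by rw [← hv0]; simp
        have hx' : x / t < w := by
          rw [div_lt_iff₀ ht0]
          have := (div_lt_iff₀ hw0).mp htgt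
          linarith
        rw [hv', ha, hsq, hw] at *
        linarith
    · -- v > 0
      set s := Real.sqrt (v / (2 * x)) with hsdef
      have hs0 : 0 < s := Real.sqrt_pos.mpr (by positivity)
      have hs2 : s ^ 2 = v / (2 * x) := Real.sq_sqrt (by positivity)
      set t := 1 / (c + s) with htdef
      have hcs : 0 < c + s := by linarith
      have ht0 : 0 < t := by positivity
      have hct : c * t < 1 := by
        rw [htdef, mul_one_div, div_lt_one hcs]; linarith
      have hsqrt : Real.sqrt (2 * x * v) = 2 * x * s := by
        have : 2 * x * v = (2 * x * s) ^ 2 := by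
          have : v = 2 * x * s ^ 2 := by field_simp at hs2 ⊢; linarith [hs2]
          rw [this]; ring
        rw [this, Real.sqrt_sq (by positivity)]
      refine ⟨v * t / (2 * (1 - c * t)) + x / t, ⟨t, ht0, hct, rfl⟩, ?_⟩
      have hval : v * t / (2 * (1 - c * t)) + x / t = a := by
        rw [ha, hsqrt, htdef]
        have h1ct : 1 - c * (1 / (c + s)) = s / (c + s) := by field_simp; ring
        rw [h1ct]
        have hv2 : v = 2 * x * s ^ 2 := by field_simp at hs2 ⊢; linarith [hs2]
        rw [hv2]; field_simp; ring
      rw [hval]; linarith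
  have hglb : IsGLB S a := by
    constructor
    · intro y hy; exact hlb y hy
    · intro b hb
      by_contra hba
      push_neg at hba
      obtain ⟨y, hyS, hy⟩ := hkey (b - a) (by linarith)
      have := hb hyS
      linarith
  exact hglb.csInf_eq hne
end

section
/- Let X be a real-valued random variable with E|X| < ∞ and u ∈ (0,1]. Then Q_X^1(u) = inf_{t∈ℝ} ( t + E[(X−t)_+]/u ), where Q_X^1(u) := (1/u) ∫_0^u Q_X(s) ds and Q_X(s) := inf{t ∈ ℝ : P[X > t] < s}. -/
open MeasureTheory

/-- Upper quantile function. -/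
noncomputable def Quant {Ω : Type*} [MeasurableSpace Ω] (μ : Measure Ω) (X : Ω → ℝ) (u : ℝ) : ℝ :=
  sInf {t : ℝ | μ {ω | X ω > t} < ENNReal.ofReal u}

/-- Integrated quantile function (conditional value-at-risk). -/
noncomputable def QuantInt {Ω : Type*} [MeasurableSpace Ω] (μ : Measure Ω) (X : Ω → ℝ)
    (u : ℝ) : ℝ :=
  (1 / u) * ∫ s in (0 : ℝ)..u, Quant μ X s

open Set Filter Topology

section Aux
variable {Ω : Type*} [MeasurableSpace Ω] {μ : Measure Ω} [IsProbabilityMeasure μ] {Y : Ω → ℝ}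

/-- The defining set of the quantile. -/
def QSet (μ : Measure Ω) (Y : Ω → ℝ) (s : ℝ) : Set ℝ := {t : ℝ | μ {ω | Y ω > t} < ENNReal.ofReal s}

lemma qset_nonempty (hY : Measurable Y) {s : ℝ} (hs : 0 < s) :
    (QSet μ Y s).Nonempty := by
  have hm : ∀ n : ℕ, NullMeasurableSet {ω | Y ω > (n:ℝ)} μ :=
    fun n => (measurableSet_lt measurable_const hY).nullMeasurableSet
  have hmono : Antitone (fun n : ℕ => {ω | Y ω > (n:ℝ)}) := by
    intro m n hmn ω hω
    simp only [mem_setOf_eq] at hω ⊢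
    exact lt_of_le_of_lt (by exact_mod_cast hmn) hω
  have hint : (⋂ n : ℕ, {ω | Y ω > (n:ℝ)}) = ∅ := by
    ext ω
    simp only [mem_iInter, mem_setOf_eq, mem_empty_iff_false, iff_false, not_forall, not_lt]
    obtain ⟨n, hn⟩ := exists_nat_gt (Y ω)
    exact ⟨n, hn.le⟩
  have htend := tendsto_measure_iInter_atTop (μ := μ) hm hmono ⟨0, measure_ne_top μ _⟩
  rw [hint, measure_empty] at htend
  have : ∀ᶠ n : ℕ in atTop, μ {ω | Y ω > (n:ℝ)} < ENNReal.ofReal s := by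
    refine htend.eventually_lt_const ?_
    simpa using hs
  obtain ⟨n, hn⟩ := this.exists
  exact ⟨n, hn⟩

lemma qset_bddBelow {s : ℝ} (hs : s < 1) :
    BddBelow (QSet μ Y s) := by
  have hmono : Monotone (fun n : ℕ => {ω | Y ω > -(n:ℝ)}) := by
    intro m n hmn ω hω
    simp only [mem_setOf_eq] at hω ⊢
    refine lt_of_le_of_lt (neg_le_neg ?_) hω
    exact_mod_cast hmn
  have hun : (⋃ n : ℕ, {ω | Y ω > -(n:ℝ)}) = univ := by
    ext ω
    simp only [mem_iUnion, mem_setOf_eq, mem_univ, iff_true]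
    obtain ⟨n, hn⟩ := exists_nat_gt (-Y ω)
    exact ⟨n, by linarith⟩
  have htend := tendsto_measure_iUnion_atTop (μ := μ) hmono
  rw [hun, measure_univ] at htend
  have : ∀ᶠ n : ℕ in atTop, ENNReal.ofReal s < μ {ω | Y ω > -(n:ℝ)} := by
    refine htend.eventually_const_lt ?_
    exact ENNReal.ofReal_lt_one.2 hs
  obtain ⟨n, hn⟩ := this.exists
  refine ⟨-(n:ℝ), fun t ht => ?_⟩
  by_contra h
  push_neg at h
  have : μ {ω | Y ω > -(n:ℝ)} ≤ μ {ω | Y ω > t} :=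
    measure_mono (fun ω hω => lt_trans h hω)
  exact absurd (lt_of_le_of_lt this ht) (not_lt.2 hn.le)

lemma quant_le_quant {s s' : ℝ} (hY : Measurable Y) (hs : 0 < s) (hs' : s' < 1) (h : s ≤ s') :
    Quant μ Y s' ≤ Quant μ Y s := by
  refine csInf_le_csInf (qset_bddBelow hs') (qset_nonempty hY hs) ?_
  intro t ht
  exact lt_of_lt_of_le ht (ENNReal.ofReal_le_ofReal h)


lemma quant_gt_of_lt (hY : Measurable Y) {s r : ℝ} (h0 : 0 < s)
    (h : ENNReal.ofReal s < μ {ω | Y ω > r}) : r < Quant μ Y s := by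
  have hs1 : s < 1 := ENNReal.ofReal_lt_one.mp (lt_of_lt_of_le h prob_le_one)
  by_contra hc
  push_neg at hc
  have key : ∀ n : ℕ, μ {ω | Y ω > r + 1/((n:ℝ)+1)} ≤ ENNReal.ofReal s := by
    intro n
    have hpos : (0:ℝ) < 1/((n:ℝ)+1) := by positivity
    have hlt : Quant μ Y s < r + 1/((n:ℝ)+1) := lt_of_le_of_lt hc (lt_add_of_pos_right r hpos)
    obtain ⟨t, ht, htlt⟩ :=
      (csInf_lt_iff (qset_bddBelow hs1) (qset_nonempty hY h0)).1 hlt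
    have : μ {ω | Y ω > r + 1/((n:ℝ)+1)} ≤ μ {ω | Y ω > t} :=
      measure_mono (fun ω hω => lt_trans htlt hω)
    exact this.trans ht.le
  have hun : {ω | Y ω > r} = ⋃ n : ℕ, {ω | Y ω > r + 1/((n:ℝ)+1)} := by
    ext ω
    simp only [mem_setOf_eq, mem_iUnion]
    constructor
    · intro hω
      obtain ⟨n, hn⟩ := exists_nat_one_div_lt (sub_pos.2 hω)
      exact ⟨n, by linarith⟩
    · rintro ⟨n, hn⟩
      have : (0:ℝ) < 1/((n:ℝ)+1) := by positivity
      linarith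
  have hmono : Monotone (fun n : ℕ => {ω | Y ω > r + 1/((n:ℝ)+1)}) := by
    intro m n hmn ω hω
    simp only [mem_setOf_eq] at hω ⊢
    have : 1/((n:ℝ)+1) ≤ 1/((m:ℝ)+1) := by
      apply one_div_le_one_div_of_le (by positivity)
      have : (m:ℝ) ≤ n := by exact_mod_cast hmn
      linarith
    linarith
  have htend := tendsto_measure_iUnion_atTop (μ := μ) hmono
  rw [← hun] at htend
  have : μ {ω | Y ω > r} ≤ ENNReal.ofReal s := le_of_tendsto' htend key
  exact absurd h (not_lt.2 this)

lemma quant_level (hY : Measurable Y) (r : ℝ) :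
    volume {s : ℝ | s ∈ Ioo (0:ℝ) 1 ∧ r < Quant μ Y s} = μ {ω | Y ω > r} := by
  set F := μ {ω | Y ω > r} with hF
  have hFt : F ≠ ⊤ := measure_ne_top μ _
  have hF1 : F ≤ 1 := prob_le_one
  set c := F.toReal with hc
  have hc1 : c ≤ 1 := by
    simpa using ENNReal.toReal_mono ENNReal.one_ne_top hF1
  have hsub1 : Ioo 0 c ⊆ {s : ℝ | s ∈ Ioo (0:ℝ) 1 ∧ r < Quant μ Y s} := fun s hs =>
    ⟨⟨hs.1, lt_of_lt_of_le hs.2 hc1⟩,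
      quant_gt_of_lt hY hs.1 ((ENNReal.ofReal_lt_iff_lt_toReal hs.1.le hFt).2 hs.2)⟩
  have hsub2 : {s : ℝ | s ∈ Ioo (0:ℝ) 1 ∧ r < Quant μ Y s} ⊆ Ioc 0 c := by
    rintro s ⟨⟨h0, h1⟩, hq⟩
    refine ⟨h0, ?_⟩
    by_contra hcs
    push_neg at hcs
    have hlt : F < ENNReal.ofReal s := (ENNReal.lt_ofReal_iff_toReal_lt hFt).2 hcs
    have := csInf_le (qset_bddBelow h1) (hlt : r ∈ QSet μ Y s)
    exact absurd hq (not_lt.2 this)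
  apply le_antisymm
  · calc volume {s : ℝ | s ∈ Ioo (0:ℝ) 1 ∧ r < Quant μ Y s} ≤ volume (Ioc 0 c) :=
        measure_mono hsub2
      _ = ENNReal.ofReal c := by rw [Real.volume_Ioc, sub_zero]
      _ = F := ENNReal.ofReal_toReal hFt
  · calc F = ENNReal.ofReal c := (ENNReal.ofReal_toReal hFt).symm
      _ = volume (Ioo 0 c) := by rw [Real.volume_Ioo, sub_zero]
      _ ≤ _ := measure_mono hsub1


lemma quant_aemeasurable (hY : Measurable Y) :
    AEMeasurable (Quant μ Y) (volume.restrict (Ioo (0:ℝ) 1)) :=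
  aemeasurable_restrict_of_antitoneOn measurableSet_Ioo
    (fun s hs s' hs' hss' => quant_le_quant hY hs.1 hs'.2 hss')

lemma key_lintegral (hY : Measurable Y) (t : ℝ) :
    ∫⁻ s in Ioo (0:ℝ) 1, ENNReal.ofReal (max (Quant μ Y s - t) 0) =
      ∫⁻ ω, ENNReal.ofReal (max (Y ω - t) 0) ∂μ := by
  have hmQ : AEMeasurable (fun s => max (Quant μ Y s - t) 0) (volume.restrict (Ioo (0:ℝ) 1)) :=
    ((quant_aemeasurable hY).sub aemeasurable_const).max aemeasurable_const
  have e1 := lintegral_eq_lintegral_meas_lt (volume.restrict (Ioo (0:ℝ) 1))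
    (f := fun s => max (Quant μ Y s - t) 0) (Eventually.of_forall fun s => le_max_right _ _) hmQ
  have e2 := lintegral_eq_lintegral_meas_lt μ (f := fun ω => max (Y ω - t) 0)
    (Eventually.of_forall fun ω => le_max_right _ _)
    ((hY.aemeasurable.sub aemeasurable_const).max aemeasurable_const)
  rw [e1, e2]
  refine setLIntegral_congr_fun measurableSet_Ioi (fun r hr => ?_)
  have hr' : (0:ℝ) < r := hr
  have h1 : {s : ℝ | r < max (Quant μ Y s - t) 0} = {s | t + r < Quant μ Y s} := by
    ext s; simp only [mem_setOf_eq, lt_max_iff]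
    constructor
    · rintro (h | h)
      · linarith
      · exact absurd h (not_lt.2 hr'.le)
    · intro h; left; linarith
  have h2 : {ω | r < max (Y ω - t) 0} = {ω | Y ω > t + r} := by
    ext ω; simp only [mem_setOf_eq, lt_max_iff, gt_iff_lt]
    constructor
    · rintro (h | h)
      · linarith
      · exact absurd h (not_lt.2 hr'.le)
    · intro h; left; linarith
  rw [h1, h2, Measure.restrict_apply' measurableSet_Ioo, ← quant_level hY (t + r)]
  congr 1
  ext s
  simp only [mem_inter_iff, mem_setOf_eq, mem_Ioo]
  tauto

lemma max_intble (hYi : Integrable Y μ) (t : ℝ) :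
    Integrable (fun ω => max (Y ω - t) 0) μ :=
  (hYi.sub (integrable_const t)).pos_part

lemma key_integrableQ (hY : Measurable Y) (hYi : Integrable Y μ) (t : ℝ) :
    Integrable (fun s => max (Quant μ Y s - t) 0) (volume.restrict (Ioo (0:ℝ) 1)) := by
  have hmQ : AEMeasurable (fun s => max (Quant μ Y s - t) 0) (volume.restrict (Ioo (0:ℝ) 1)) :=
    ((quant_aemeasurable hY).sub aemeasurable_const).max aemeasurable_const
  refine ⟨hmQ.aestronglyMeasurable, ?_⟩
  rw [hasFiniteIntegral_iff_ofReal (f := fun s => max (Quant μ Y s - t) 0)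
    (Eventually.of_forall fun s => le_max_right _ _)]
  rw [key_lintegral hY t]
  exact (max_intble hYi t).lintegral_lt_top

lemma key_real (hY : Measurable Y) (hYi : Integrable Y μ) (t : ℝ) :
    ∫ s in Ioo (0:ℝ) 1, max (Quant μ Y s - t) 0 = ∫ ω, max (Y ω - t) 0 ∂μ := by
  rw [integral_eq_lintegral_of_nonneg_ae (f := fun s => max (Quant μ Y s - t) 0)
      (Eventually.of_forall fun s => le_max_right _ _)
      (key_integrableQ hY hYi t).aestronglyMeasurable,
    integral_eq_lintegral_of_nonneg_ae (f := fun ω => max (Y ω - t) 0)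
      (Eventually.of_forall fun ω => le_max_right _ _)
      (max_intble hYi t).aestronglyMeasurable,
    key_lintegral hY t]


lemma quant_integrable (hY : Measurable Y) (hYi : Integrable Y μ) :
    Integrable (Quant μ Y) (volume.restrict (Ioo (0:ℝ) 1)) := by
  set ν := volume.restrict (Ioo (0:ℝ) 1) with hν
  have hpos : Integrable (fun s => max (Quant μ Y s - 0) 0) ν := key_integrableQ hY hYi 0
  have hneg : Integrable (fun s => max (-Quant μ Y s) 0) ν := by
    refine ⟨((quant_aemeasurable hY).neg.max aemeasurable_const).aestronglyMeasurable, ?_⟩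
    rw [hasFiniteIntegral_iff_ofReal (f := fun s => max (-Quant μ Y s) 0)
      (Eventually.of_forall fun s => le_max_right _ _)]
    have e1 := lintegral_eq_lintegral_meas_lt ν (f := fun s => max (-Quant μ Y s) 0)
      (Eventually.of_forall fun s => le_max_right _ _)
      ((quant_aemeasurable hY).neg.max aemeasurable_const)
    rw [e1]
    have hb : ∀ r ∈ Ioi (0:ℝ), ν {s | r < max (-Quant μ Y s) 0} ≤ μ {ω | Y ω ≤ -r} := by
      intro r hr
      have hr' : (0:ℝ) < r := hr
      set c := (μ {ω | Y ω > -r}).toReal with hc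
      have hFt : μ {ω | Y ω > -r} ≠ ⊤ := measure_ne_top μ _
      have hsub : {s : ℝ | r < max (-Quant μ Y s) 0} ∩ Ioo 0 1 ⊆ Icc c 1 := by
        rintro s ⟨hs1, hs2⟩
        simp only [mem_setOf_eq, lt_max_iff] at hs1
        have hQ : Quant μ Y s < -r := by
          rcases hs1 with h | h
          · linarith
          · exact absurd h (not_lt.2 hr'.le)
        refine ⟨?_, hs2.2.le⟩
        by_contra hcs
        push_neg at hcs
        have : ENNReal.ofReal s < μ {ω | Y ω > -r} :=
          (ENNReal.ofReal_lt_iff_lt_toReal hs2.1.le hFt).2 hcs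
        exact absurd (quant_gt_of_lt hY hs2.1 this) (not_lt.2 hQ.le)
      have hco : μ {ω | Y ω ≤ -r} = 1 - μ {ω | Y ω > -r} := by
        rw [← prob_compl_eq_one_sub (measurableSet_lt measurable_const hY)]
        congr 1
        ext ω
        simp [not_lt]
      calc ν {s | r < max (-Quant μ Y s) 0}
          = volume ({s : ℝ | r < max (-Quant μ Y s) 0} ∩ Ioo 0 1) :=
            Measure.restrict_apply' measurableSet_Ioo
        _ ≤ volume (Icc c 1) := measure_mono hsub
        _ = ENNReal.ofReal (1 - c) := Real.volume_Icc
        _ = 1 - μ {ω | Y ω > -r} := by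
            rw [ENNReal.ofReal_sub _ ENNReal.toReal_nonneg, ENNReal.ofReal_one,
              ENNReal.ofReal_toReal hFt]
        _ = μ {ω | Y ω ≤ -r} := hco.symm
    have e2 := lintegral_eq_lintegral_meas_le μ (f := fun ω => max (-Y ω) 0)
      (Eventually.of_forall fun ω => le_max_right _ _)
      (hY.aemeasurable.neg.max aemeasurable_const)
    have e3 : ∫⁻ r in Ioi (0:ℝ), μ {a | r ≤ max (-Y a) 0} = ∫⁻ r in Ioi (0:ℝ), μ {ω | Y ω ≤ -r} := by
      refine setLIntegral_congr_fun measurableSet_Ioi (fun r hr => ?_)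
      have hr' : (0:ℝ) < r := hr
      congr 1
      ext a
      simp only [mem_setOf_eq, le_max_iff]
      constructor
      · rintro (h | h)
        · linarith
        · exact absurd h (not_le.2 hr')
      · intro h; left; linarith
    calc ∫⁻ r in Ioi (0:ℝ), ν {s | r < max (-Quant μ Y s) 0}
        ≤ ∫⁻ r in Ioi (0:ℝ), μ {ω | Y ω ≤ -r} := by
          refine lintegral_mono_ae ?_
          rw [ae_restrict_iff' measurableSet_Ioi]
          exact Eventually.of_forall hb
      _ = ∫⁻ ω, ENNReal.ofReal (max (-Y ω) 0) ∂μ := by rw [e2, e3]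
      _ < ⊤ := hYi.neg.pos_part.lintegral_lt_top
  have hcomb : Integrable (fun s => max (Quant μ Y s - 0) 0 - max (-Quant μ Y s) 0) ν :=
    hpos.sub hneg
  refine hcomb.congr (Eventually.of_forall fun s => ?_)
  rcases le_total (Quant μ Y s) 0 with h | h
  · simp [max_eq_right h, max_eq_left (neg_nonneg.2 h)]
  · simp [max_eq_left h, max_eq_right (neg_nonpos.2 h)]


end Aux

/-- Rockafellar–Uryasev variational formula for the integrated quantile function. -/
theorem stmt_5 {Ω : Type*} [MeasurableSpace Ω] (μ : Measure Ω) [IsProbabilityMeasure μ]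
    (X : Ω → ℝ) (hX : Integrable X μ) (u : ℝ) (hu : u ∈ Set.Ioc (0 : ℝ) 1) :
    QuantInt μ X u = ⨅ t : ℝ, (t + (∫ ω, max (X ω - t) 0 ∂μ) / u) := by
  obtain ⟨hu0, hu1⟩ := hu
  have hsm := hX.aestronglyMeasurable
  set Y := hsm.mk X with hYdef
  have hY : Measurable Y := hsm.stronglyMeasurable_mk.measurable
  have hXY : X =ᵐ[μ] Y := hsm.ae_eq_mk
  have hYi : Integrable Y μ := hX.congr hXY
  have hquant : Quant μ X = Quant μ Y := by
    funext s
    unfold Quant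
    congr 2
    ext t
    have hμ : μ {ω | X ω > t} = μ {ω | Y ω > t} := by
      apply measure_congr
      filter_upwards [hXY] with ω h
      change (X ω > t) = (Y ω > t)
      rw [h]
    simp [mem_setOf_eq, hμ]
  have hGcongr : ∀ t : ℝ, ∫ ω, max (X ω - t) 0 ∂μ = ∫ ω, max (Y ω - t) 0 ∂μ := fun t =>
    integral_congr_ae (hXY.mono fun ω h => by dsimp only; rw [h])
  set Q := Quant μ Y with hQdef
  set G := fun t : ℝ => ∫ ω, max (Y ω - t) 0 ∂μ with hGdef
  set I := ∫ s in Ioo (0:ℝ) u, Q s with hIdef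
  have hQint : Integrable Q (volume.restrict (Ioo (0:ℝ) 1)) := quant_integrable hY hYi
  have hsub : Ioo (0:ℝ) u ⊆ Ioo 0 1 := Ioo_subset_Ioo le_rfl hu1
  have hQint' : Integrable Q (volume.restrict (Ioo (0:ℝ) u)) :=
    hQint.mono_measure (Measure.restrict_mono hsub le_rfl)
  have hconst : ∀ c : ℝ, IntegrableOn (fun _ : ℝ => c) (Ioo (0:ℝ) u) volume :=
    fun c => integrableOn_const (by rw [Real.volume_Ioo]; exact ENNReal.ofReal_ne_top)
  have hconstint : ∀ c : ℝ, ∫ _s in Ioo (0:ℝ) u, c = u * c := by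
    intro c
    rw [setIntegral_const, measureReal_def, Real.volume_Ioo, sub_zero, ENNReal.toReal_ofReal hu0.le, smul_eq_mul]
  have claim2 : ∀ t : ℝ, I / u ≤ t + G t / u := by
    intro t
    have h1 : I - u * t = ∫ s in Ioo (0:ℝ) u, (Q s - t) := by
      rw [integral_sub hQint' (hconst t), hconstint t, hIdef]
    have h2 : ∫ s in Ioo (0:ℝ) u, (Q s - t) ≤ ∫ s in Ioo (0:ℝ) u, max (Q s - t) 0 :=
      integral_mono (hQint'.sub (hconst t))
        ((key_integrableQ hY hYi t).mono_measure (Measure.restrict_mono hsub le_rfl))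
        (fun s => le_max_left _ _)
    have h3 : ∫ s in Ioo (0:ℝ) u, max (Q s - t) 0 ≤ ∫ s in Ioo (0:ℝ) 1, max (Q s - t) 0 :=
      setIntegral_mono_set (key_integrableQ hY hYi t)
        (Eventually.of_forall fun s => le_max_right _ _)
        (HasSubset.Subset.eventuallyLE hsub)
    have h5 : I ≤ u * t + G t := by
      have := (h1 ▸ h2).trans (h3.trans_eq (key_real hY hYi t))
      linarith
    calc I / u ≤ (u * t + G t) / u := (div_le_div_iff_of_pos_right hu0).2 h5
      _ = t + G t / u := by rw [add_div, mul_div_cancel_left₀ t hu0.ne']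
  have hbdd : BddBelow (Set.range fun t : ℝ => t + G t / u) := by
    refine ⟨I / u, ?_⟩
    rintro x ⟨t, rfl⟩
    exact claim2 t
  have claim1 : (⨅ t : ℝ, t + G t / u) ≤ I / u := by
    rcases lt_or_eq_of_le hu1 with hu1' | hu1'
    · -- u < 1
      set t₀ := Q u with ht₀
      have hdisj : Disjoint (Ioo (0:ℝ) u) (Ico u 1) := by
        rw [Set.disjoint_left]
        rintro s ⟨_, hs2⟩ ⟨hs3, _⟩
        exact absurd hs3 (not_le.2 hs2)
      have hIco : ∫ s in Ico u 1, max (Q s - t₀) 0 = 0 := by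
        rw [setIntegral_congr_fun measurableSet_Ico
          (fun s hs => max_eq_right (sub_nonpos.2 (quant_le_quant hY hu0 hs.2 hs.1)))]
        exact integral_zero _ _
      have hIoo : ∫ s in Ioo (0:ℝ) u, max (Q s - t₀) 0 = ∫ s in Ioo (0:ℝ) u, (Q s - t₀) :=
        setIntegral_congr_fun measurableSet_Ioo
          (fun s hs => max_eq_left (sub_nonneg.2 (quant_le_quant hY hs.1 hu1' hs.2.le)))
      have hsplit : ∫ s in Ioo (0:ℝ) 1, max (Q s - t₀) 0 =
          (∫ s in Ioo (0:ℝ) u, max (Q s - t₀) 0) + ∫ s in Ico u 1, max (Q s - t₀) 0 := by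
        rw [← setIntegral_union hdisj measurableSet_Ico
          ((key_integrableQ hY hYi t₀).mono_measure (Measure.restrict_mono hsub le_rfl))
          ((key_integrableQ hY hYi t₀).mono_measure
            (Measure.restrict_mono (show Ico u 1 ⊆ Ioo 0 1 from fun s hs => ⟨lt_of_lt_of_le hu0 hs.1, hs.2⟩) le_rfl)),
          Ioo_union_Ico_eq_Ioo hu0 hu1]
      have hG0 : G t₀ = I - u * t₀ := by
        show (∫ ω, max (Y ω - t₀) 0 ∂μ) = I - u * t₀
        rw [← key_real hY hYi t₀, hsplit, hIco, hIoo, integral_sub hQint' (hconst t₀),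
          hconstint t₀, hIdef]
        ring
      have : t₀ + G t₀ / u = I / u := by
        rw [hG0]
        field_simp
        ring
      exact this ▸ ciInf_le hbdd t₀
    · -- u = 1
      subst hu1'
      have hval : ∀ n : ℕ, (-(n:ℝ)) + G (-(n:ℝ)) / 1 = ∫ s in Ioo (0:ℝ) 1, max (Q s) (-(n:ℝ)) := by
        intro n
        have hmax : ∀ s : ℝ, max (Q s - (-(n:ℝ))) 0 = max (Q s) (-(n:ℝ)) + (n:ℝ) := by
          intro s
          rcases le_total (Q s) (-(n:ℝ)) with h | h
          · rw [max_eq_right (by linarith : Q s - -(n:ℝ) ≤ 0), max_eq_right h]; ring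
          · rw [max_eq_left (by linarith : (0:ℝ) ≤ Q s - -(n:ℝ)), max_eq_left h]; ring
        have hint : Integrable (fun s => max (Q s) (-(n:ℝ))) (volume.restrict (Ioo (0:ℝ) 1)) := by
          have := (key_integrableQ hY hYi (-(n:ℝ))).sub
            (integrableOn_const (by rw [Real.volume_Ioo]; exact ENNReal.ofReal_ne_top) :
              IntegrableOn (fun _ : ℝ => (n:ℝ)) (Ioo (0:ℝ) 1) volume)
          refine this.congr (Eventually.of_forall fun s => ?_)
          show max (Q s - (-(n:ℝ))) 0 - (n:ℝ) = max (Q s) (-(n:ℝ))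
          rw [hmax s]; ring
        have hconst1 : ∫ _s in Ioo (0:ℝ) 1, (n:ℝ) = (n:ℝ) := by
          rw [setIntegral_const, measureReal_def, Real.volume_Ioo, sub_zero, ENNReal.toReal_ofReal zero_le_one,
            smul_eq_mul, one_mul]
        show (-(n:ℝ)) + (∫ ω, max (Y ω - (-(n:ℝ))) 0 ∂μ) / 1 = _
        rw [div_one, ← key_real hY hYi (-(n:ℝ))]
        have : ∫ s in Ioo (0:ℝ) 1, max (Q s - (-(n:ℝ))) 0 =
            (∫ s in Ioo (0:ℝ) 1, max (Q s) (-(n:ℝ))) + (n:ℝ) := by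
          have h1 : ∫ s in Ioo (0:ℝ) 1, max (Q s - (-(n:ℝ))) 0 =
              ∫ s in Ioo (0:ℝ) 1, (max (Q s) (-(n:ℝ)) + (n:ℝ)) :=
            setIntegral_congr_fun measurableSet_Ioo (fun s _ => hmax s)
          rw [h1, integral_add hint (integrableOn_const
            (by rw [Real.volume_Ioo]; exact ENNReal.ofReal_ne_top)), hconst1]
        rw [this]
        ring
      have htend : Tendsto (fun n : ℕ => ∫ s in Ioo (0:ℝ) 1, max (Q s) (-(n:ℝ))) atTop
          (𝓝 (∫ s in Ioo (0:ℝ) 1, Q s)) := by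
        refine tendsto_integral_of_dominated_convergence (fun s => |Q s|)
          (fun n => ((quant_aemeasurable hY).max aemeasurable_const).aestronglyMeasurable)
          hQint.abs (fun n => Eventually.of_forall fun s => ?_)
          (Eventually.of_forall fun s => ?_)
        · show ‖max (Q s) (-(n:ℝ))‖ ≤ |Q s|
          rw [Real.norm_eq_abs]
          rcases le_total (-(n:ℝ)) (Q s) with h | h
          · rw [max_eq_left h]
          · rw [max_eq_right h, abs_neg, abs_of_nonneg (Nat.cast_nonneg n),
              abs_of_nonpos (h.trans (neg_nonpos.2 (Nat.cast_nonneg n)))]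
            linarith
        · have hev : (fun n : ℕ => max (Q s) (-(n:ℝ))) =ᶠ[atTop] fun _ => Q s := by
            filter_upwards [eventually_ge_atTop ⌈-(Q s)⌉₊] with n hn
            apply max_eq_left
            have h1 : -(Q s) ≤ (⌈-(Q s)⌉₊ : ℝ) := Nat.le_ceil _
            have h2 : ((⌈-(Q s)⌉₊ : ℕ) : ℝ) ≤ (n : ℝ) := by exact_mod_cast hn
            linarith
          exact Tendsto.congr' hev.symm tendsto_const_nhds
      have hle : ∀ n : ℕ, (⨅ t : ℝ, t + G t / 1) ≤ ∫ s in Ioo (0:ℝ) 1, max (Q s) (-(n:ℝ)) :=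
        fun n => (hval n) ▸ ciInf_le hbdd (-(n:ℝ))
      have := ge_of_tendsto' htend hle
      simpa [hIdef] using this
  have hinf : (⨅ t : ℝ, t + G t / u) = I / u := le_antisymm claim1 (le_ciInf claim2)
  simp_rw [hGcongr]
  rw [hinf, QuantInt, hquant, intervalIntegral.integral_of_le hu0.le,
    integral_Ioc_eq_integral_Ioo, ← hIdef, one_div, inv_mul_eq_div]
end

section
/- For integrable real-valued random variables X and Y and all u ∈ (0,1), the integrated quantile function is subadditive: Q^1_{X+Y}(u) ≤ Q^1_X(u) + Q^1_Y(u), where Q^1_Z(u) := (1/u)∫_0^u Q_Z(s) ds and Q_Z(s) := inf{t : P[Z > t] < s}. -/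
open MeasureTheory

namespace QuantAux

open Set Filter
open scoped ENNReal

set_option linter.unusedSectionVars false
set_option linter.unusedVariables false

variable {Ω : Type*} [MeasurableSpace Ω] {μ : Measure Ω} [IsProbabilityMeasure μ] {Z : Ω → ℝ}

lemma ofReal_max_zero (x : ℝ) : ENNReal.ofReal (max x 0) = ENNReal.ofReal x := by
  rcases le_total x 0 with h | h
  · rw [max_eq_right h, ENNReal.ofReal_zero, eq_comm, ENNReal.ofReal_eq_zero]
    exact h
  · rw [max_eq_left h]

lemma meas_gt_anti : Antitone (fun c : ℝ => μ {ω | Z ω > c}) := fun a b hab =>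
  measure_mono fun ω hω => lt_of_le_of_lt hab hω

lemma exists_meas_gt_lt (hZm : Measurable Z) {s : ℝ} (hs : 0 < s) :
    ∃ t : ℝ, μ {ω | Z ω > t} < ENNReal.ofReal s := by
  have hmeas : ∀ n : ℕ, MeasurableSet {ω | Z ω > (n : ℝ)} := fun n =>
    measurableSet_lt measurable_const hZm
  have hanti : Antitone fun n : ℕ => {ω | Z ω > (n : ℝ)} := by
    intro a b hab ω hω
    have : (a : ℝ) ≤ b := by exact_mod_cast hab
    exact lt_of_le_of_lt this hω
  have hempty : (⋂ n : ℕ, {ω | Z ω > (n : ℝ)}) = ∅ := by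
    ext ω
    simp only [mem_iInter, mem_setOf_eq, mem_empty_iff_false, iff_false, not_forall, not_lt]
    obtain ⟨n, hn⟩ := exists_nat_gt (Z ω)
    exact ⟨n, hn.le⟩
  have htend := tendsto_measure_iInter_atTop (μ := μ)
    (fun n => (hmeas n).nullMeasurableSet) hanti ⟨0, measure_ne_top μ _⟩
  rw [hempty, measure_empty] at htend
  have hpos : (0:ℝ≥0∞) < ENNReal.ofReal s := ENNReal.ofReal_pos.2 hs
  obtain ⟨n, hn⟩ := (htend.eventually_lt_const hpos).exists
  exact ⟨n, hn⟩

lemma exists_lt_meas_gt (hZm : Measurable Z) {s : ℝ} (hs : s < 1) :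
    ∃ t : ℝ, ENNReal.ofReal s < μ {ω | Z ω > t} := by
  have hmono : Monotone fun n : ℕ => {ω | Z ω > -(n : ℝ)} := by
    intro a b hab ω hω
    have h1 : (a : ℝ) ≤ b := by exact_mod_cast hab
    have : -(b : ℝ) ≤ -(a : ℝ) := by linarith
    exact lt_of_le_of_lt this hω
  have huniv : (⋃ n : ℕ, {ω | Z ω > -(n : ℝ)}) = univ := by
    ext ω
    simp only [mem_iUnion, mem_setOf_eq, mem_univ, iff_true]
    obtain ⟨n, hn⟩ := exists_nat_gt (-(Z ω))
    exact ⟨n, by linarith⟩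
  have htend := tendsto_measure_iUnion_atTop (μ := μ) hmono
  rw [Function.comp_def] at htend
  have hlim : μ (⋃ n : ℕ, {ω | Z ω > -(n : ℝ)}) = 1 := by
    rw [huniv]; exact measure_univ
  rw [hlim] at htend
  have hlt : ENNReal.ofReal s < 1 := by
    rw [← ENNReal.ofReal_one]
    exact (ENNReal.ofReal_lt_ofReal_iff one_pos).2 hs
  obtain ⟨n, hn⟩ := (htend.eventually_const_lt hlt).exists
  exact ⟨-(n : ℝ), hn⟩

lemma qset_bddBelow (hZm : Measurable Z) {s : ℝ} (hs : s < 1) :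
    BddBelow {t : ℝ | μ {ω | Z ω > t} < ENNReal.ofReal s} := by
  obtain ⟨t0, ht0⟩ := exists_lt_meas_gt (μ := μ) hZm hs
  refine ⟨t0, fun t ht => ?_⟩
  by_contra h
  push_neg at h
  exact absurd (lt_of_le_of_lt (meas_gt_anti h.le) ht) (not_lt.2 ht0.le)

lemma lt_quant (hZm : Measurable Z) {s c : ℝ} (hs0 : 0 < s)
    (hc : ENNReal.ofReal s < μ {ω | Z ω > c}) : c < Quant μ Z s := by
  have hU : {ω | Z ω > c} = ⋃ n : ℕ, {ω | Z ω > c + 1/((n:ℝ)+1)} := by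
    ext ω
    simp only [mem_setOf_eq, mem_iUnion]
    constructor
    · intro h
      obtain ⟨n, hn⟩ := exists_nat_one_div_lt (sub_pos.2 h)
      exact ⟨n, by linarith⟩
    · rintro ⟨n, hn⟩
      have : (0:ℝ) < 1/((n:ℝ)+1) := by positivity
      linarith
  have hmono : Monotone fun n : ℕ => {ω | Z ω > c + 1/((n:ℝ)+1)} := by
    intro a b hab ω hω
    have hab' : (a:ℝ) + 1 ≤ (b:ℝ) + 1 := by
      have : (a : ℝ) ≤ b := by exact_mod_cast hab
      linarith
    have hdiv : 1/((b:ℝ)+1) ≤ 1/((a:ℝ)+1) := by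
      apply one_div_le_one_div_of_le
      · positivity
      · exact hab'
    simp only [mem_setOf_eq] at hω ⊢
    linarith
  rw [hU, hmono.measure_iUnion] at hc
  obtain ⟨n, hn⟩ := lt_iSup_iff.1 hc
  have hlb : ∀ t ∈ {t : ℝ | μ {ω | Z ω > t} < ENNReal.ofReal s}, c + 1/((n:ℝ)+1) ≤ t := by
    intro t ht
    by_contra h
    push_neg at h
    exact absurd (lt_of_le_of_lt (meas_gt_anti h.le) ht) (not_lt.2 hn.le)
  have hle : c + 1/((n:ℝ)+1) ≤ Quant μ Z s :=
    le_csInf (exists_meas_gt_lt (μ := μ) hZm hs0) hlb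
  have hpos : (0:ℝ) < 1/((n:ℝ)+1) := by positivity
  linarith

lemma le_meas_of_lt_quant (hZm : Measurable Z) {s c : ℝ} (hs1 : s < 1)
    (h : c < Quant μ Z s) : ENNReal.ofReal s ≤ μ {ω | Z ω > c} := by
  by_contra hlt
  push_neg at hlt
  exact absurd (csInf_le (qset_bddBelow hZm hs1) hlt) (not_le.2 h)

lemma meas_lt_of_quant_lt (hZm : Measurable Z) {s r : ℝ} (hs0 : 0 < s)
    (h : Quant μ Z s < r) : μ {ω | Z ω > r} < ENNReal.ofReal s := by
  obtain ⟨t, ht, htr⟩ := exists_lt_of_csInf_lt (exists_meas_gt_lt (μ := μ) hZm hs0) h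
  exact lt_of_le_of_lt (meas_gt_anti htr.le) ht

lemma quant_antitoneOn (hZm : Measurable Z) : AntitoneOn (Quant μ Z) (Ioo (0:ℝ) 1) := by
  intro s hs s' hs' hss'
  exact csInf_le_csInf (qset_bddBelow hZm hs'.2) (exists_meas_gt_lt (μ := μ) hZm hs.1)
    (fun t ht => lt_of_lt_of_le ht (ENNReal.ofReal_le_ofReal hss'))

lemma measure_quant_gt (hZm : Measurable Z) {u : ℝ} (hu : u ∈ Ioo (0:ℝ) 1) (c : ℝ) :
    volume ({s : ℝ | c < Quant μ Z s} ∩ Ioo 0 u)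
      = min (μ {ω | Z ω > c}) (ENNReal.ofReal u) := by
  set m := (μ {ω | Z ω > c}).toReal with hm
  have hfin : μ {ω | Z ω > c} ≠ ∞ := measure_ne_top μ _
  have hmeq : ENNReal.ofReal m = μ {ω | Z ω > c} := ENNReal.ofReal_toReal hfin
  have hm0 : 0 ≤ m := ENNReal.toReal_nonneg
  have hsub : {s : ℝ | c < Quant μ Z s} ∩ Ioo 0 u ⊆ Ioc 0 (min m u) := by
    rintro s ⟨hq, hs0, hsu⟩
    refine ⟨hs0, le_min ?_ hsu.le⟩
    have h1 := le_meas_of_lt_quant hZm (lt_trans hsu hu.2) hq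
    rw [← hmeq] at h1
    exact (ENNReal.ofReal_le_ofReal_iff hm0).1 h1
  have hsup : Ioo 0 (min m u) ⊆ {s : ℝ | c < Quant μ Z s} ∩ Ioo 0 u := by
    rintro s ⟨hs0, hsmu⟩
    have hsm : s < m := lt_of_lt_of_le hsmu (min_le_left _ _)
    have hsu : s < u := lt_of_lt_of_le hsmu (min_le_right _ _)
    refine ⟨?_, hs0, hsu⟩
    apply lt_quant hZm hs0
    rw [← hmeq]
    exact (ENNReal.ofReal_lt_ofReal_iff (lt_of_le_of_lt (le_of_lt hs0) hsm)).2 hsm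
  have h1 : volume (Ioo (0:ℝ) (min m u)) = ENNReal.ofReal (min m u) := by
    rw [Real.volume_Ioo, sub_zero]
  have h2 : volume (Ioc (0:ℝ) (min m u)) = ENNReal.ofReal (min m u) := by
    rw [Real.volume_Ioc, sub_zero]
  have heq : volume ({s : ℝ | c < Quant μ Z s} ∩ Ioo 0 u) = ENNReal.ofReal (min m u) :=
    le_antisymm (h2 ▸ measure_mono hsub) (h1 ▸ measure_mono hsup)
  rw [heq, ← hmeq]
  rcases le_total m u with h | h
  · rw [min_eq_left h, min_eq_left (ENNReal.ofReal_le_ofReal h)]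
  · rw [min_eq_right h, min_eq_right (ENNReal.ofReal_le_ofReal h)]

lemma quant_aemeasurable (hZm : Measurable Z) {u : ℝ} (hu : u ∈ Ioo (0:ℝ) 1) :
    AEMeasurable (Quant μ Z) (volume.restrict (Ioo (0:ℝ) u)) :=
  aemeasurable_restrict_of_antitoneOn measurableSet_Ioo
    ((quant_antitoneOn hZm).mono (Ioo_subset_Ioo le_rfl hu.2.le))

lemma shift_lintegral (f : ℝ → ℝ≥0∞) (hf : Measurable f) (t : ℝ) :
    ∫⁻ r in Ioi (0:ℝ), f (r + t) = ∫⁻ r in Ioi t, f r := by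
  have hpre : (fun r : ℝ => r + t) ⁻¹' Ioi t = Ioi 0 := by
    ext r
    simp [mem_Ioi]
  have := (measurePreserving_add_right (volume : Measure ℝ) t).setLIntegral_comp_preimage
    (s := Ioi t) measurableSet_Ioi hf
  rw [hpre] at this
  exact this

lemma meas_gt_measurable (hZm : Measurable Z) :
    Measurable (fun r : ℝ => μ {ω | Z ω > r}) :=
  (meas_gt_anti (μ := μ) (Z := Z)).measurable

lemma key (hZm : Measurable Z) {u : ℝ} (hu : u ∈ Ioo (0:ℝ) 1) (t : ℝ) :
    ∫⁻ s in Ioo (0:ℝ) u, ENNReal.ofReal (Quant μ Z s - t)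
      = ∫⁻ r in Ioi t, min (μ {ω | Z ω > r}) (ENNReal.ofReal u) := by
  have hae : AEMeasurable (fun s => max (Quant μ Z s - t) 0) (volume.restrict (Ioo (0:ℝ) u)) :=
    ((quant_aemeasurable hZm hu).sub aemeasurable_const).max aemeasurable_const
  have hlc := lintegral_eq_lintegral_meas_lt (volume.restrict (Ioo (0:ℝ) u))
    (f := fun s => max (Quant μ Z s - t) 0)
    (Eventually.of_forall fun s => le_max_right _ _) hae
  have h2 : ∀ r ∈ Ioi (0:ℝ),
      (volume.restrict (Ioo (0:ℝ) u)) {s | r < max (Quant μ Z s - t) 0}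
        = min (μ {ω | Z ω > r + t}) (ENNReal.ofReal u) := by
    intro r hr
    rw [Measure.restrict_apply' measurableSet_Ioo]
    have hset : {s : ℝ | r < max (Quant μ Z s - t) 0} = {s : ℝ | r + t < Quant μ Z s} := by
      ext s
      simp only [mem_setOf_eq, lt_max_iff]
      constructor
      · rintro (h | h)
        · linarith
        · exact absurd h (not_lt.2 (le_of_lt hr))
      · intro h
        left
        linarith
    rw [hset]
    exact measure_quant_gt hZm hu (r + t)
  calc ∫⁻ s in Ioo (0:ℝ) u, ENNReal.ofReal (Quant μ Z s - t)
      = ∫⁻ s in Ioo (0:ℝ) u, ENNReal.ofReal (max (Quant μ Z s - t) 0) := by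
        simp_rw [ofReal_max_zero]
    _ = ∫⁻ r in Ioi 0, (volume.restrict (Ioo (0:ℝ) u)) {s | r < max (Quant μ Z s - t) 0} := hlc
    _ = ∫⁻ r in Ioi 0, min (μ {ω | Z ω > r + t}) (ENNReal.ofReal u) :=
        setLIntegral_congr_fun measurableSet_Ioi h2
    _ = ∫⁻ r in Ioi t, min (μ {ω | Z ω > r}) (ENNReal.ofReal u) :=
        shift_lintegral (fun r => min (μ {ω | Z ω > r}) (ENNReal.ofReal u))
          ((meas_gt_measurable hZm).min measurable_const) t

lemma layercake_Z (hZm : Measurable Z) (t : ℝ) :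
    ∫⁻ ω, ENNReal.ofReal (Z ω - t) ∂μ = ∫⁻ r in Ioi t, μ {ω | Z ω > r} := by
  have hlc := lintegral_eq_lintegral_meas_lt μ (f := fun ω => max (Z ω - t) 0)
    (Eventually.of_forall fun ω => le_max_right _ _)
    ((hZm.sub measurable_const).max measurable_const).aemeasurable
  have h2 : ∀ r ∈ Ioi (0:ℝ), μ {ω | r < max (Z ω - t) 0} = μ {ω | Z ω > r + t} := by
    intro r hr
    congr 1
    ext ω
    simp only [mem_setOf_eq, lt_max_iff]
    constructor
    · rintro (h | h)
      · linarith
      · exact absurd h (not_lt.2 (le_of_lt hr))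
    · intro h
      left
      linarith
  calc ∫⁻ ω, ENNReal.ofReal (Z ω - t) ∂μ
      = ∫⁻ ω, ENNReal.ofReal (max (Z ω - t) 0) ∂μ := by simp_rw [ofReal_max_zero]
    _ = ∫⁻ r in Ioi 0, μ {ω | r < max (Z ω - t) 0} := hlc
    _ = ∫⁻ r in Ioi 0, μ {ω | Z ω > r + t} :=
        setLIntegral_congr_fun measurableSet_Ioi h2
    _ = ∫⁻ r in Ioi t, μ {ω | Z ω > r} :=
        shift_lintegral (fun r => μ {ω | Z ω > r}) (meas_gt_measurable hZm) t

lemma lint_sub_lt_top (hZ : Integrable Z μ) (t : ℝ) :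
    ∫⁻ ω, ENNReal.ofReal (Z ω - t) ∂μ < ∞ := by
  have hbd : ∀ ω, ENNReal.ofReal (Z ω - t) ≤ (‖Z ω‖₊ : ℝ≥0∞) + ENNReal.ofReal |t| := by
    intro ω
    have h1 : Z ω - t ≤ |Z ω| + |t| := by
      have h2 := le_abs_self (Z ω)
      have h3 := neg_le_abs t
      linarith
    calc ENNReal.ofReal (Z ω - t) ≤ ENNReal.ofReal (|Z ω| + |t|) := ENNReal.ofReal_le_ofReal h1
      _ ≤ ENNReal.ofReal |Z ω| + ENNReal.ofReal |t| := ENNReal.ofReal_add_le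
      _ = (‖Z ω‖₊ : ℝ≥0∞) + ENNReal.ofReal |t| := by
          rw [← enorm_eq_nnnorm, Real.enorm_eq_ofReal_abs]
  calc ∫⁻ ω, ENNReal.ofReal (Z ω - t) ∂μ
      ≤ ∫⁻ ω, ((‖Z ω‖₊ : ℝ≥0∞) + ENNReal.ofReal |t|) ∂μ := lintegral_mono hbd
    _ = (∫⁻ ω, (‖Z ω‖₊ : ℝ≥0∞) ∂μ) + ENNReal.ofReal |t| * μ univ := by
        rw [lintegral_add_right _ measurable_const, lintegral_const]
    _ < ∞ := by
        apply ENNReal.add_lt_top.2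
        constructor
        · exact hZ.2
        · rw [measure_univ, mul_one]
          exact ENNReal.ofReal_lt_top

lemma key_lt_top (hZm : Measurable Z) (hZ : Integrable Z μ) {u : ℝ} (hu : u ∈ Ioo (0:ℝ) 1)
    (t : ℝ) : ∫⁻ s in Ioo (0:ℝ) u, ENNReal.ofReal (Quant μ Z s - t) < ∞ := by
  rw [key hZm hu t]
  calc ∫⁻ r in Ioi t, min (μ {ω | Z ω > r}) (ENNReal.ofReal u)
      ≤ ∫⁻ r in Ioi t, μ {ω | Z ω > r} := lintegral_mono fun r => min_le_left _ _
    _ = ∫⁻ ω, ENNReal.ofReal (Z ω - t) ∂μ := (layercake_Z hZm t).symm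
    _ < ∞ := lint_sub_lt_top hZ t

lemma quant_lb (hZm : Measurable Z) {u : ℝ} (hu : u ∈ Ioo (0:ℝ) 1) :
    ∀ s ∈ Ioo (0:ℝ) u, Quant μ Z u ≤ Quant μ Z s := fun s hs =>
  quant_antitoneOn hZm ⟨hs.1, hs.2.trans hu.2⟩ hu hs.2.le

lemma quant_integrableOn (hZm : Measurable Z) (hZ : Integrable Z μ) {u : ℝ}
    (hu : u ∈ Ioo (0:ℝ) 1) : IntegrableOn (Quant μ Z) (Ioo (0:ℝ) u) volume := by
  refine ⟨(quant_aemeasurable hZm hu).aestronglyMeasurable, ?_⟩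
  set q := Quant μ Z u with hq
  rw [hasFiniteIntegral_def]
  have hbd : ∀ᵐ s ∂(volume.restrict (Ioo (0:ℝ) u)),
      (‖Quant μ Z s‖₊ : ℝ≥0∞) ≤ ENNReal.ofReal |q| + ENNReal.ofReal (Quant μ Z s - q) := by
    rw [ae_restrict_iff' measurableSet_Ioo]
    apply Eventually.of_forall
    intro s hs
    have hge : q ≤ Quant μ Z s := quant_lb hZm hu s hs
    have habs : |Quant μ Z s| ≤ |q| + (Quant μ Z s - q) := by
      rw [abs_le]
      constructor
      · have h1 : -|q| ≤ q := neg_abs_le q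
        linarith
      · have h2 : q ≤ |q| := le_abs_self q
        linarith
    calc (‖Quant μ Z s‖₊ : ℝ≥0∞) = ENNReal.ofReal |Quant μ Z s| := by
          rw [← enorm_eq_nnnorm, Real.enorm_eq_ofReal_abs]
      _ ≤ ENNReal.ofReal (|q| + (Quant μ Z s - q)) := ENNReal.ofReal_le_ofReal habs
      _ ≤ ENNReal.ofReal |q| + ENNReal.ofReal (Quant μ Z s - q) := ENNReal.ofReal_add_le
  calc ∫⁻ s in Ioo (0:ℝ) u, (‖Quant μ Z s‖₊ : ℝ≥0∞)
      ≤ ∫⁻ s in Ioo (0:ℝ) u, (ENNReal.ofReal |q| + ENNReal.ofReal (Quant μ Z s - q)) :=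
        lintegral_mono_ae hbd
    _ = ENNReal.ofReal |q| * volume (Ioo (0:ℝ) u)
        + ∫⁻ s in Ioo (0:ℝ) u, ENNReal.ofReal (Quant μ Z s - q) := by
        rw [lintegral_add_left measurable_const, setLIntegral_const]
    _ < ∞ := by
        apply ENNReal.add_lt_top.2
        constructor
        · exact ENNReal.mul_lt_top ENNReal.ofReal_lt_top
            (lt_of_le_of_lt (measure_mono Ioo_subset_Icc_self)
              (by rw [Real.volume_Icc]; exact ENNReal.ofReal_lt_top))
        · exact key_lt_top hZm hZ hu q

lemma integral_posPart_eq (hZm : Measurable Z) (t : ℝ) :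
    ∫ ω, max (Z ω - t) 0 ∂μ = (∫⁻ ω, ENNReal.ofReal (Z ω - t) ∂μ).toReal := by
  have h : ∫ ω, max (Z ω - t) 0 ∂μ
      = (∫⁻ ω, ENNReal.ofReal (max (Z ω - t) 0) ∂μ).toReal :=
    integral_eq_lintegral_of_nonneg_ae (Eventually.of_forall fun ω => le_max_right _ _)
      ((hZm.sub measurable_const).max measurable_const).aestronglyMeasurable
  rw [h]
  congr 1
  simp_rw [ofReal_max_zero]

lemma stepB (hZm : Measurable Z) (hZ : Integrable Z μ) {u : ℝ} (hu : u ∈ Ioo (0:ℝ) 1) :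
    ∫ s in Ioo (0:ℝ) u, Quant μ Z s
      = u * Quant μ Z u + ∫ ω, max (Z ω - Quant μ Z u) 0 ∂μ := by
  set q := Quant μ Z u with hqdef
  have hInt := quant_integrableOn hZm hZ hu
  have hconst : IntegrableOn (fun _ : ℝ => q) (Ioo (0:ℝ) u) volume :=
    integrableOn_const (by rw [Real.volume_Ioo]; exact ENNReal.ofReal_lt_top.ne)
  have hsubInt : IntegrableOn (fun s => Quant μ Z s - q) (Ioo (0:ℝ) u) volume :=
    hInt.sub hconst
  have h2 : ∫ s in Ioo (0:ℝ) u, Quant μ Z s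
      = ∫ s in Ioo (0:ℝ) u, (q + (Quant μ Z s - q)) := by
    apply setIntegral_congr_fun measurableSet_Ioo
    intro s _
    ring
  have hc : ∫ _ in Ioo (0:ℝ) u, q ∂volume = u * q := by
    rw [setIntegral_const, Real.volume_real_Ioo, sub_zero, max_eq_left hu.1.le,
      smul_eq_mul]
  have hnn : (0 : ℝ → ℝ) ≤ᵐ[volume.restrict (Ioo (0:ℝ) u)] fun s => Quant μ Z s - q := by
    rw [EventuallyLE, ae_restrict_iff' measurableSet_Ioo]
    exact Eventually.of_forall fun s hs => sub_nonneg.2 (quant_lb hZm hu s hs)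
  have h3 : ∫ s in Ioo (0:ℝ) u, (Quant μ Z s - q)
      = (∫⁻ s in Ioo (0:ℝ) u, ENNReal.ofReal (Quant μ Z s - q)).toReal :=
    integral_eq_lintegral_of_nonneg_ae hnn
      ((quant_aemeasurable hZm hu).sub aemeasurable_const).aestronglyMeasurable
  have h4 : ∫⁻ s in Ioo (0:ℝ) u, ENNReal.ofReal (Quant μ Z s - q)
      = ∫⁻ ω, ENNReal.ofReal (Z ω - q) ∂μ := by
    rw [key hZm hu q]
    calc ∫⁻ r in Ioi q, min (μ {ω | Z ω > r}) (ENNReal.ofReal u)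
        = ∫⁻ r in Ioi q, μ {ω | Z ω > r} :=
          setLIntegral_congr_fun measurableSet_Ioi (fun r hr =>
            min_eq_left (le_of_lt (meas_lt_of_quant_lt hZm hu.1 hr)))
      _ = ∫⁻ ω, ENNReal.ofReal (Z ω - q) ∂μ := (layercake_Z hZm q).symm
  calc ∫ s in Ioo (0:ℝ) u, Quant μ Z s
      = ∫ s in Ioo (0:ℝ) u, (q + (Quant μ Z s - q)) := h2
    _ = (∫ _ in Ioo (0:ℝ) u, q ∂volume) + ∫ s in Ioo (0:ℝ) u, (Quant μ Z s - q) :=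
        integral_add hconst hsubInt
    _ = u * q + ∫ ω, max (Z ω - q) 0 ∂μ := by
        rw [hc, h3, h4, ← integral_posPart_eq hZm q]

lemma stepA (hZm : Measurable Z) (hZ : Integrable Z μ) {u : ℝ} (hu : u ∈ Ioo (0:ℝ) 1)
    (t : ℝ) :
    ∫ s in Ioo (0:ℝ) u, Quant μ Z s ≤ u * t + ∫ ω, max (Z ω - t) 0 ∂μ := by
  have hInt := quant_integrableOn hZm hZ hu
  have hconst : IntegrableOn (fun _ : ℝ => t) (Ioo (0:ℝ) u) volume :=
    integrableOn_const (by rw [Real.volume_Ioo]; exact ENNReal.ofReal_lt_top.ne)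
  have hpos : IntegrableOn (fun s => max (Quant μ Z s - t) 0) (Ioo (0:ℝ) u) volume :=
    (hInt.sub hconst).pos_part
  have haddInt : IntegrableOn (fun s => t + max (Quant μ Z s - t) 0) (Ioo (0:ℝ) u) volume :=
    hconst.add hpos
  have hc : ∫ _ in Ioo (0:ℝ) u, t ∂volume = u * t := by
    rw [setIntegral_const, Real.volume_real_Ioo, sub_zero, max_eq_left hu.1.le,
      smul_eq_mul]
  have h3 : ∫ s in Ioo (0:ℝ) u, max (Quant μ Z s - t) 0
      = (∫⁻ s in Ioo (0:ℝ) u, ENNReal.ofReal (max (Quant μ Z s - t) 0)).toReal :=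
    integral_eq_lintegral_of_nonneg_ae
      (Eventually.of_forall fun s => le_max_right _ _)
      (((quant_aemeasurable hZm hu).sub aemeasurable_const).max
        aemeasurable_const).aestronglyMeasurable
  have h3' : (∫⁻ s in Ioo (0:ℝ) u, ENNReal.ofReal (max (Quant μ Z s - t) 0))
      = ∫⁻ s in Ioo (0:ℝ) u, ENNReal.ofReal (Quant μ Z s - t) := by
    simp_rw [ofReal_max_zero]
  have h4 : (∫⁻ s in Ioo (0:ℝ) u, ENNReal.ofReal (Quant μ Z s - t)).toReal
      ≤ (∫⁻ ω, ENNReal.ofReal (Z ω - t) ∂μ).toReal := by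
    apply ENNReal.toReal_mono (lint_sub_lt_top hZ t).ne
    calc ∫⁻ s in Ioo (0:ℝ) u, ENNReal.ofReal (Quant μ Z s - t)
        = ∫⁻ r in Ioi t, min (μ {ω | Z ω > r}) (ENNReal.ofReal u) := key hZm hu t
      _ ≤ ∫⁻ r in Ioi t, μ {ω | Z ω > r} := lintegral_mono fun r => min_le_left _ _
      _ = ∫⁻ ω, ENNReal.ofReal (Z ω - t) ∂μ := (layercake_Z hZm t).symm
  calc ∫ s in Ioo (0:ℝ) u, Quant μ Z s
      ≤ ∫ s in Ioo (0:ℝ) u, (t + max (Quant μ Z s - t) 0) := by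
        apply integral_mono hInt haddInt
        intro s
        have h := le_max_left (Quant μ Z s - t) (0:ℝ)
        show Quant μ Z s ≤ t + max (Quant μ Z s - t) 0
        linarith
    _ = (∫ _ in Ioo (0:ℝ) u, t ∂volume) + ∫ s in Ioo (0:ℝ) u, max (Quant μ Z s - t) 0 :=
        integral_add hconst hpos
    _ ≤ u * t + ∫ ω, max (Z ω - t) 0 ∂μ := by
        rw [hc, h3, h3', integral_posPart_eq hZm t]
        exact add_le_add_right h4 _

lemma quant_congr {Z' : Ω → ℝ} (h : Z =ᵐ[μ] Z') : Quant μ Z = Quant μ Z' := by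
  funext s
  unfold Quant
  congr 1
  ext t
  simp only [mem_setOf_eq]
  have heq : μ {ω | Z ω > t} = μ {ω | Z' ω > t} := by
    apply measure_congr
    rw [Filter.eventuallyEq_set]
    filter_upwards [h] with ω hω
    simp [hω]
  rw [heq]

end QuantAux

open QuantAux Set

theorem stmt_6 {Ω : Type*} [MeasurableSpace Ω] (μ : Measure Ω) [IsProbabilityMeasure μ]
    (X Y : Ω → ℝ) (hX : Integrable X μ) (hY : Integrable Y μ)
    (u : ℝ) (hu : u ∈ Set.Ioo (0 : ℝ) 1) :
    QuantInt μ (fun ω => X ω + Y ω) u ≤ QuantInt μ X u + QuantInt μ Y u := by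
  obtain ⟨hu0, hu1⟩ := hu
  set X' := hX.1.mk X with hX'def
  set Y' := hY.1.mk Y with hY'def
  have hX'm : Measurable X' := hX.1.measurable_mk
  have hY'm : Measurable Y' := hY.1.measurable_mk
  have hXe : X =ᵐ[μ] X' := hX.1.ae_eq_mk
  have hYe : Y =ᵐ[μ] Y' := hY.1.ae_eq_mk
  have hX' : Integrable X' μ := hX.congr hXe
  have hY' : Integrable Y' μ := hY.congr hYe
  have hWe : (fun ω => X ω + Y ω) =ᵐ[μ] (fun ω => X' ω + Y' ω) := hXe.add hYe
  have hW'm : Measurable (fun ω => X' ω + Y' ω) := hX'm.add hY'm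
  have hW' : Integrable (fun ω => X' ω + Y' ω) μ := hX'.add hY'
  have hQI : ∀ (Z Z' : Ω → ℝ), Z =ᵐ[μ] Z' → QuantInt μ Z u = QuantInt μ Z' u := by
    intro Z Z' h
    unfold QuantInt
    rw [quant_congr h]
  rw [hQI _ _ hWe, hQI _ _ hXe, hQI _ _ hYe]
  have hiv : ∀ Z : Ω → ℝ, QuantInt μ Z u = (1/u) * ∫ s in Ioo (0:ℝ) u, Quant μ Z s := by
    intro Z
    unfold QuantInt
    rw [intervalIntegral.integral_of_le hu0.le, integral_Ioc_eq_integral_Ioo]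
  rw [hiv, hiv, hiv]
  set qX := Quant μ X' u with hqX
  set qY := Quant μ Y' u with hqY
  have huIoo : u ∈ Ioo (0:ℝ) 1 := ⟨hu0, hu1⟩
  have hA : ∫ s in Ioo (0:ℝ) u, Quant μ (fun ω => X' ω + Y' ω) s
      ≤ u * (qX + qY) + ∫ ω, max (X' ω + Y' ω - (qX + qY)) 0 ∂μ :=
    stepA hW'm hW' huIoo (qX + qY)
  have hiX : Integrable (fun ω => max (X' ω - qX) 0) μ :=
    (hX'.sub (integrable_const qX)).pos_part
  have hiY : Integrable (fun ω => max (Y' ω - qY) 0) μ :=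
    (hY'.sub (integrable_const qY)).pos_part
  have hiW : Integrable (fun ω => max (X' ω + Y' ω - (qX + qY)) 0) μ :=
    (hW'.sub (integrable_const (qX + qY))).pos_part
  have hiXY : Integrable (fun ω => max (X' ω - qX) 0 + max (Y' ω - qY) 0) μ := hiX.add hiY
  have hptw : ∀ ω, max (X' ω + Y' ω - (qX + qY)) 0
      ≤ max (X' ω - qX) 0 + max (Y' ω - qY) 0 := by
    intro ω
    rcases le_total (X' ω + Y' ω - (qX + qY)) 0 with h | h
    · have h1 := le_max_right (X' ω - qX) (0:ℝ)
      have h2 := le_max_right (Y' ω - qY) (0:ℝ)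
      rw [max_eq_right h]
      linarith
    · have h1 := le_max_left (X' ω - qX) (0:ℝ)
      have h2 := le_max_left (Y' ω - qY) (0:ℝ)
      rw [max_eq_left h]
      linarith
  have hsub : ∫ ω, max (X' ω + Y' ω - (qX + qY)) 0 ∂μ
      ≤ (∫ ω, max (X' ω - qX) 0 ∂μ) + ∫ ω, max (Y' ω - qY) 0 ∂μ := by
    calc ∫ ω, max (X' ω + Y' ω - (qX + qY)) 0 ∂μ
        ≤ ∫ ω, (max (X' ω - qX) 0 + max (Y' ω - qY) 0) ∂μ := integral_mono hiW hiXY hptw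
      _ = (∫ ω, max (X' ω - qX) 0 ∂μ) + ∫ ω, max (Y' ω - qY) 0 ∂μ := integral_add hiX hiY
  have hBX : u * qX + ∫ ω, max (X' ω - qX) 0 ∂μ = ∫ s in Ioo (0:ℝ) u, Quant μ X' s :=
    (stepB hX'm hX' huIoo).symm
  have hBY : u * qY + ∫ ω, max (Y' ω - qY) 0 ∂μ = ∫ s in Ioo (0:ℝ) u, Quant μ Y' s :=
    (stepB hY'm hY' huIoo).symm
  have hchain : ∫ s in Ioo (0:ℝ) u, Quant μ (fun ω => X' ω + Y' ω) s
      ≤ (∫ s in Ioo (0:ℝ) u, Quant μ X' s) + ∫ s in Ioo (0:ℝ) u, Quant μ Y' s := by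
    calc ∫ s in Ioo (0:ℝ) u, Quant μ (fun ω => X' ω + Y' ω) s
        ≤ u * (qX + qY) + ∫ ω, max (X' ω + Y' ω - (qX + qY)) 0 ∂μ := hA
      _ ≤ u * (qX + qY) + ((∫ ω, max (X' ω - qX) 0 ∂μ) + ∫ ω, max (Y' ω - qY) 0 ∂μ) :=
          add_le_add_right hsub _
      _ = (u * qX + ∫ ω, max (X' ω - qX) 0 ∂μ) + (u * qY + ∫ ω, max (Y' ω - qY) 0 ∂μ) := by
          ring
      _ = (∫ s in Ioo (0:ℝ) u, Quant μ X' s) + ∫ s in Ioo (0:ℝ) u, Quant μ Y' s := by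
          rw [hBX, hBY]
  have h1u : (0:ℝ) < 1/u := by positivity
  calc (1/u) * ∫ s in Ioo (0:ℝ) u, Quant μ (fun ω => X' ω + Y' ω) s
      ≤ (1/u) * ((∫ s in Ioo (0:ℝ) u, Quant μ X' s) + ∫ s in Ioo (0:ℝ) u, Quant μ Y' s) :=
        mul_le_mul_of_nonneg_left hchain h1u.le
    _ = (1/u) * (∫ s in Ioo (0:ℝ) u, Quant μ X' s)
        + (1/u) * ∫ s in Ioo (0:ℝ) u, Quant μ Y' s := by ring
end

section
/- Let ψ, φ : [0,∞) → [0,∞) be convex with ψ(0) = φ(0) = 0, and define the inverse Legendre transform [Tψ](x) := inf_{t>0} (ψ(t) + x)/t. Then for every x ≥ 0, [T(ψ+φ)](x) ≤ [Tψ](x) + [Tφ](x). -/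
/-- Inverse Legendre transform. -/
noncomputable def invLegendre (ψ : ℝ → ℝ) (x : ℝ) : ℝ :=
  sInf {y : ℝ | ∃ t : ℝ, 0 < t ∧ y = (ψ t + x) / t}

private lemma scale_lemma (ψ : ℝ → ℝ) (hconv : ConvexOn ℝ (Set.Ici 0) ψ)
    (hψ0 : ψ 0 = 0) {t l : ℝ} (ht : 0 ≤ t) (hl0 : 0 ≤ l) (hl1 : l ≤ 1) :
    ψ (l * t) ≤ l * ψ t := by
  have h := hconv.2 (Set.mem_Ici.mpr (le_refl (0:ℝ))) (Set.mem_Ici.mpr ht)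
    (sub_nonneg.mpr hl1) hl0 (by ring)
  simpa [hψ0] using h

theorem stmt_12 (ψ φ : ℝ → ℝ)
    (hψconv : ConvexOn ℝ (Set.Ici 0) ψ) (hφconv : ConvexOn ℝ (Set.Ici 0) φ)
    (hψ0 : ψ 0 = 0) (hφ0 : φ 0 = 0)
    (hψnn : ∀ t ∈ Set.Ici (0 : ℝ), 0 ≤ ψ t) (hφnn : ∀ t ∈ Set.Ici (0 : ℝ), 0 ≤ φ t)
    (x : ℝ) (hx : 0 ≤ x) :
    invLegendre (fun t => ψ t + φ t) x ≤ invLegendre ψ x + invLegendre φ x := by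
  have hS1ne : Set.Nonempty {y : ℝ | ∃ t : ℝ, 0 < t ∧ y = (ψ t + x) / t} :=
    ⟨(ψ 1 + x) / 1, 1, one_pos, rfl⟩
  have hS2ne : Set.Nonempty {y : ℝ | ∃ t : ℝ, 0 < t ∧ y = (φ t + x) / t} :=
    ⟨(φ 1 + x) / 1, 1, one_pos, rfl⟩
  have hbdd : BddBelow {y : ℝ | ∃ t : ℝ, 0 < t ∧ y = ((fun t => ψ t + φ t) t + x) / t} := by
    refine ⟨0, ?_⟩
    rintro y ⟨t, ht, rfl⟩
    have := hψnn t (le_of_lt ht)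
    have := hφnn t (le_of_lt ht)
    positivity
  refine le_of_forall_pos_le_add fun ε hε => ?_
  obtain ⟨a, ha, hat⟩ := Real.lt_sInf_add_pos hS1ne (half_pos hε)
  obtain ⟨t, ht, rfl⟩ := ha
  obtain ⟨b, hb, hbs⟩ := Real.lt_sInf_add_pos hS2ne (half_pos hε)
  obtain ⟨s, hs, rfl⟩ := hb
  set u : ℝ := t * s / (t + s) with hu
  have hts : 0 < t + s := by linarith
  have hupos : 0 < u := by positivity
  have hl1 : u / t = s / (t + s) := by rw [hu, div_div, div_eq_div_iff (by positivity) hts.ne']; ring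
  have hl2 : u / s = t / (t + s) := by rw [hu, div_div, div_eq_div_iff (by positivity) hts.ne']; ring
  have hl1nn : (0:ℝ) ≤ u / t := by positivity
  have hl1le : u / t ≤ 1 := by
    rw [hl1]; exact div_le_one_of_le₀ (by linarith) hts.le
  have hl2nn : (0:ℝ) ≤ u / s := by positivity
  have hl2le : u / s ≤ 1 := by
    rw [hl2]; exact div_le_one_of_le₀ (by linarith) hts.le
  have hψu : ψ u ≤ (u / t) * ψ t := by
    have h := scale_lemma ψ hψconv hψ0 ht.le hl1nn hl1le
    rwa [div_mul_cancel₀ _ ht.ne'] at h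
  have hφu : φ u ≤ (u / s) * φ s := by
    have h := scale_lemma φ hφconv hφ0 hs.le hl2nn hl2le
    rwa [div_mul_cancel₀ _ hs.ne'] at h
  have hxu : x / u = x / t + x / s := by
    rw [hu]; field_simp; ring
  have key : (ψ u + φ u + x) / u ≤ (ψ t + x) / t + (φ s + x) / s := by
    have h1 : ψ u / u ≤ ψ t / t := by
      rw [div_le_div_iff₀ hupos ht]
      calc ψ u * t ≤ ((u / t) * ψ t) * t := by nlinarith
        _ = ψ t * u := by field_simp
    have h2 : φ u / u ≤ φ s / s := by
      rw [div_le_div_iff₀ hupos hs]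
      calc φ u * s ≤ ((u / s) * φ s) * s := by nlinarith
        _ = φ s * u := by field_simp
    have e3 : (ψ u + φ u + x) / u = ψ u / u + φ u / u + x / u := by ring
    have e1 : (ψ t + x) / t = ψ t / t + x / t := by ring
    have e2 : (φ s + x) / s = φ s / s + x / s := by ring
    rw [e3, e1, e2, hxu]
    linarith
  have hmem : (ψ u + φ u + x) / u ∈
      {y : ℝ | ∃ r : ℝ, 0 < r ∧ y = ((fun t => ψ t + φ t) r + x) / r} :=
    ⟨u, hupos, rfl⟩
  calc invLegendre (fun t => ψ t + φ t) x ≤ (ψ u + φ u + x) / u := csInf_le hbdd hmem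
    _ ≤ (ψ t + x) / t + (φ s + x) / s := key
    _ ≤ invLegendre ψ x + invLegendre φ x + ε := by
        unfold invLegendre; linarith
end

section
/- Let q > 2 and define ψ_q(t) := Σ_{k ≥ ⌈q⌉, k ≥ q} t^k/k! (the tail of the exponential series starting at the smallest integer k with k ≥ q, summing all integer k ≥ q). Then for all x > 0, x^{−1} ψ_q(x) ≤ e^x · min{1/q, 1/5}. -/
open Real

lemma aux_summable (x : ℝ) : Summable (fun k : ℕ => (k : ℝ) * (x ^ k / (Nat.factorial k : ℝ))) := by
  rw [← summable_nat_add_iff 1]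
  have h : (fun k : ℕ => ((k + 1 : ℕ) : ℝ) * (x ^ (k + 1) / (Nat.factorial (k + 1) : ℝ)))
      = fun k : ℕ => x * (x ^ k / (Nat.factorial k : ℝ)) := by
    funext k
    have hk : (Nat.factorial (k + 1) : ℝ) = (k + 1 : ℝ) * (Nat.factorial k : ℝ) := by
      rw [Nat.factorial_succ]; push_cast; ring
    rw [hk]
    have h1 : (Nat.factorial k : ℝ) ≠ 0 := Nat.cast_ne_zero.mpr (Nat.factorial_ne_zero k)
    have h2 : ((k : ℝ) + 1) ≠ 0 := by positivity
    field_simp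
    push_cast
    ring
  rw [h]
  exact (Real.summable_pow_div_factorial x).mul_left x

lemma aux_tsum_mul (x : ℝ) :
    ∑' k : ℕ, (k : ℝ) * (x ^ k / (Nat.factorial k : ℝ)) = x * Real.exp x := by
  rw [Summable.tsum_eq_zero_add (aux_summable x)]
  have h : (fun k : ℕ => ((k + 1 : ℕ) : ℝ) * (x ^ (k + 1) / (Nat.factorial (k + 1) : ℝ)))
      = fun k : ℕ => x * (x ^ k / (Nat.factorial k : ℝ)) := by
    funext k
    have hk : (Nat.factorial (k + 1) : ℝ) = (k + 1 : ℝ) * (Nat.factorial k : ℝ) := by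
      rw [Nat.factorial_succ]; push_cast; ring
    rw [hk]
    have h1 : (Nat.factorial k : ℝ) ≠ 0 := Nat.cast_ne_zero.mpr (Nat.factorial_ne_zero k)
    have h2 : ((k : ℝ) + 1) ≠ 0 := by positivity
    field_simp
    push_cast
    ring
  simp only [h]
  rw [tsum_mul_left, Real.exp_eq_exp_ℝ, NormedSpace.exp_eq_tsum_div]
  simp

lemma aux_key5 (x : ℝ) (hx : 0 < x) :
    (∑' k : ℕ, if 3 ≤ k then x ^ k / (Nat.factorial k : ℝ) else 0)
      ≤ x * Real.exp x / 5 := by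
  set t : ℕ → ℝ := fun k => x ^ k / (Nat.factorial k : ℝ) with ht
  have htpos : ∀ k, 0 ≤ t k := fun k => by positivity
  set h : ℕ → ℝ := fun k => if 3 ≤ k then t k else 0 with hh
  set g : ℕ → ℝ := fun k => (1 / 5 : ℝ) * ((k : ℝ) * t k) with hgdef
  have hhsum : Summable h := by
    apply Summable.of_nonneg_of_le (fun k => ?_) (fun k => ?_) (Real.summable_pow_div_factorial x)
    · by_cases hk : 3 ≤ k <;> simp [h, hk, htpos k]
    · by_cases hk : 3 ≤ k <;> simp [h, hk, htpos k, t]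
  have hgsum : Summable g := ((aux_summable x).mul_left _)
  have hgval : ∑' k, g k = x * Real.exp x / 5 := by
    rw [hgdef, tsum_mul_left, aux_tsum_mul x]; ring
  have hDsum : Summable (fun k => g k - h k) := hgsum.sub hhsum
  have hD : 0 ≤ ∑' k, (g k - h k) := by
    rw [← Summable.sum_add_tsum_nat_add 10 hDsum]
    have tail : 0 ≤ ∑' i : ℕ, (g (i + 10) - h (i + 10)) := by
      apply tsum_nonneg
      intro i
      have h1 : h (i + 10) = t (i + 10) := by simp [h]
      have h2 : (2 : ℝ) ≤ ((i + 10 : ℕ) : ℝ) / 5 := by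
        push_cast
        have : (0:ℝ) ≤ (i:ℝ) := Nat.cast_nonneg i
        linarith
      have := htpos (i + 10)
      simp only [hgdef, h1]
      nlinarith
    have head : 0 ≤ ∑ i ∈ Finset.range 10, (g i - h i) := by
      simp only [hgdef, hh, ht]
      norm_num [Finset.sum_range_succ, Nat.factorial]
      nlinarith [sq_nonneg x, sq_nonneg (x-3), sq_nonneg (x^2-3*x), sq_nonneg (x^3-3*x^2),
        sq_nonneg (x^4-3*x^3), pow_pos hx 5, pow_pos hx 3, pow_pos hx 7, mul_pos hx hx]
    linarith
  have := Summable.tsum_sub hgsum hhsum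
  rw [← hgval]
  have : ∑' k, (g k - h k) = (∑' k, g k) - ∑' k, h k := Summable.tsum_sub hgsum hhsum
  linarith [this ▸ hD]

theorem stmt_14 (q : ℝ) (hq : 2 < q) (x : ℝ) (hx : 0 < x) :
    x⁻¹ * (∑' k : ℕ, if q ≤ (k : ℝ) then x ^ k / (Nat.factorial k : ℝ) else 0)
      ≤ Real.exp x * min (1 / q) (1 / 5) := by
  have hq0 : 0 < q := by linarith
  set t : ℕ → ℝ := fun k => x ^ k / (Nat.factorial k : ℝ) with ht
  have htpos : ∀ k, 0 ≤ t k := fun k => by positivity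
  set f : ℕ → ℝ := fun k => if q ≤ (k : ℝ) then t k else 0 with hf
  have hfsum : Summable f := by
    apply Summable.of_nonneg_of_le (fun k => ?_) (fun k => ?_) (Real.summable_pow_div_factorial x)
    · by_cases hk : q ≤ (k : ℝ) <;> simp [hf, hk, htpos k]
    · by_cases hk : q ≤ (k : ℝ) <;> simp [hf, hk, htpos k, t]
  have key : ∑' k, f k ≤ x * Real.exp x * min (1 / q) (1 / 5) := by
    rcases le_total q 5 with h5 | h5
    · -- q ≤ 5 : min = 1/5
      have hmin : min (1 / q) (1 / 5) = 1 / 5 :=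
        min_eq_right (by apply one_div_le_one_div_of_le hq0 h5)
      rw [hmin]
      have hle : ∑' k, f k ≤ ∑' k : ℕ, if 3 ≤ k then t k else 0 := by
        have hsumh : Summable (fun k : ℕ => if 3 ≤ k then t k else 0) := by
          apply Summable.of_nonneg_of_le (fun k => ?_) (fun k => ?_)
            (Real.summable_pow_div_factorial x)
          · by_cases hk : 3 ≤ k <;> simp [hk, htpos k]
          · by_cases hk : 3 ≤ k <;> simp [hk, htpos k, t]
        apply Summable.tsum_le_tsum _ hfsum hsumh
        intro k
        by_cases hk : q ≤ (k : ℝ)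
        · have hk3 : 3 ≤ k := by
            have : (2 : ℝ) < (k : ℝ) := lt_of_lt_of_le hq hk
            have : 2 < k := by exact_mod_cast this
            omega
          simp [hf, hk, hk3]
        · by_cases hk3 : 3 ≤ k <;> simp [hf, hk, hk3, htpos k]
      calc ∑' k, f k ≤ _ := hle
        _ ≤ x * Real.exp x / 5 := aux_key5 x hx
        _ = x * Real.exp x * (1 / 5) := by ring
    · -- 5 ≤ q : min = 1/q
      have hmin : min (1 / q) (1 / 5) = 1 / q :=
        min_eq_left (by apply one_div_le_one_div_of_le (by norm_num) h5)
      rw [hmin]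
      have hle : ∑' k, f k ≤ ∑' k : ℕ, (1 / q) * ((k : ℝ) * t k) := by
        apply Summable.tsum_le_tsum _ hfsum ((aux_summable x).mul_left _)
        intro k
        by_cases hk : q ≤ (k : ℝ)
        · have h1 : (1 : ℝ) ≤ (k : ℝ) / q := (one_le_div hq0).mpr hk
          have := htpos k
          simp only [hf, if_pos hk]
          calc t k = 1 * t k := by ring
            _ ≤ ((k : ℝ) / q) * t k := by nlinarith
            _ = 1 / q * ((k : ℝ) * t k) := by ring
        · simp only [hf, if_neg hk]
          have := htpos k
          positivity
      calc ∑' k, f k ≤ ∑' k : ℕ, (1 / q) * ((k : ℝ) * t k) := hle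
        _ = (1 / q) * (x * Real.exp x) := by rw [tsum_mul_left, aux_tsum_mul x]
        _ = x * Real.exp x * (1 / q) := by ring
  calc x⁻¹ * (∑' k, f k) ≤ x⁻¹ * (x * Real.exp x * min (1 / q) (1 / 5)) := by
        apply mul_le_mul_of_nonneg_left key (by positivity)
    _ = Real.exp x * min (1 / q) (1 / 5) := by field_simp
end
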